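/- The product ∏_{i=1}^{n} (1 - 1/p_i) over the first n primes tends to 0 as n → ∞. -/

import Mathlib

/-! Since `1 - x ≤ exp (-x)`, the product is at most `exp (-∑ 1 / pᵢ)`, and the sum of the
reciprocals of the primes diverges. -/

open Filter Finset Topology

/-- `p i` is the `i`-th prime (1-indexed: `p 1 = 2`). -/
noncomputable def p (i : ℕ) : ℕ := Nat.nth Nat.Prime (i - 1)

theorem tendsto_prod_range_one_sub_of_not_summable {a : ℕ → ℝ} (ha₀ : ∀ j, 0 ≤ a j)
    (ha₁ : ∀ j, a j ≤ 1) (ha : ¬ Summable a) :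
    Tendsto (fun n => ∏ j ∈ range n, (1 - a j)) atTop (𝓝 0) := by
  have hfactor_nonneg : ∀ j, 0 ≤ 1 - a j := fun j => sub_nonneg.mpr (ha₁ j)
  have hle_exp : ∀ n, ∏ j ∈ range n, (1 - a j) ≤ Real.exp (-∑ j ∈ range n, a j) := fun n =>
    calc ∏ j ∈ range n, (1 - a j)
        ≤ ∏ j ∈ range n, Real.exp (-a j) :=
          prod_le_prod (fun j _ => hfactor_nonneg j)
            fun j _ => by linarith [Real.add_one_le_exp (-a j)]
      _ = Real.exp (-∑ j ∈ range n, a j) := by rw [← Real.exp_sum, sum_neg_distrib]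
  have hsum : Tendsto (fun n => ∑ j ∈ range n, a j) atTop atTop :=
    (not_summable_iff_tendsto_nat_atTop_of_nonneg ha₀).mp ha
  exact squeeze_zero (fun n => prod_nonneg fun j _ => hfactor_nonneg j) hle_exp
    (Real.tendsto_exp_atBot.comp (tendsto_neg_atTop_atBot.comp hsum))

theorem not_summable_one_div_nth_prime :
    ¬ Summable (fun j => 1 / (Nat.nth Nat.Prime j : ℝ)) := by
  have hprimes := Nat.infinite_setOfPred_prime
  have hcomp : (fun j => 1 / (Nat.nth Nat.Prime j : ℝ)) =
      Set.indicator {q | q.Prime} (fun n : ℕ => 1 / (n : ℝ)) ∘ Nat.nth Nat.Prime := by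
    funext j
    simp
  rw [hcomp, (Nat.nth_injective hprimes).summable_iff]
  · exact not_summable_one_div_on_primes
  · intro n hn
    rw [Nat.range_nth_of_infinite hprimes] at hn
    exact Set.indicator_of_notMem hn _

theorem stmt_3 :
    Tendsto (fun n : ℕ => ∏ i ∈ Finset.Icc 1 n, (1 - 1 / (p i : ℝ)))
      atTop (𝓝 0) := by
  have hreindex : ∀ n, ∏ i ∈ Icc 1 n, (1 - 1 / (p i : ℝ))
      = ∏ j ∈ range n, (1 - 1 / (Nat.nth Nat.Prime j : ℝ)) := fun n => by
    rw [← Ico_add_one_right_eq_Icc, prod_Ico_eq_prod_range]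
    simp [p]
  simp only [hreindex]
  refine tendsto_prod_range_one_sub_of_not_summable (fun j => by positivity) (fun j => ?_)
    not_summable_one_div_nth_prime
  have hpos : (1 : ℝ) ≤ Nat.nth Nat.Prime j := mod_cast (Nat.prime_nth_prime j).one_lt.le
  exact div_le_one_of_le₀ hpos (by positivity)
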